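/- arXiv:1902.00784 — 5 statements merged into one kernel-verified Lean document; each statement's English description precedes it below -/
import Mathlib

section
/- Let P be a full-dimensional polytope in ℝ^d containing the origin in its interior, given as the convex hull of its vertex set V, and let U be an orthogonal transformation. Then P = U P° if and only if: (1) for all v, w ∈ V, ⟨U v, w⟩ ≤ 1; and (2) for each facet F of P there is a vertex v ∈ V such that ⟨U v, w⟩ = 1 for all vertices w of F. -/
open Matrix Module

noncomputable section

/-- The polar of a set `P ⊆ ℝ^d`. -/
def polar {d : ℕ} (A : Set (Fin d → ℝ)) : Set (Fin d → ℝ) :=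
  {x | ∀ a ∈ A, x ⬝ᵥ a ≤ 1}

/-- `F` is a facet of the `d`-dimensional polytope `P ⊆ ℝ^d`: the intersection of `P`
with the boundary hyperplane of a valid halfspace, having dimension `d - 1`. -/
def IsFacet {d : ℕ} (P F : Set (Fin d → ℝ)) : Prop :=
  ∃ a : Fin d → ℝ, a ≠ 0 ∧ ∃ b : ℝ, (∀ x ∈ P, x ⬝ᵥ a ≤ b) ∧
    F = {x ∈ P | x ⬝ᵥ a = b} ∧
    Module.finrank ℝ (affineSpan ℝ F).direction = d - 1

section Aux

variable {d : ℕ}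

/-- Dot product with a fixed vector on the left, as a linear map. -/
def dlinAux (a : Fin d → ℝ) : (Fin d → ℝ) →ₗ[ℝ] ℝ where
  toFun x := a ⬝ᵥ x
  map_add' x y := by simp [dotProduct_add]
  map_smul' c x := by simp [dotProduct_smul]

/-- Dot product with a fixed vector on the right, as a linear map. -/
def dlinrAux (a : Fin d → ℝ) : (Fin d → ℝ) →ₗ[ℝ] ℝ where
  toFun x := x ⬝ᵥ a
  map_add' x y := by simp [add_dotProduct]
  map_smul' c x := by simp [smul_dotProduct]

lemma isLinear_dlinAux (a : Fin d → ℝ) : IsLinearMap ℝ (fun x : Fin d → ℝ => a ⬝ᵥ x) :=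
  ⟨fun x y => by simp [dotProduct_add], fun c x => by simp [dotProduct_smul]⟩

lemma isLinear_dotrAux (a : Fin d → ℝ) : IsLinearMap ℝ (fun x : Fin d → ℝ => x ⬝ᵥ a) :=
  ⟨fun x y => by simp [add_dotProduct], fun c x => by simp [smul_dotProduct]⟩

lemma lin_eq_dotAux (f : (Fin d → ℝ) →ₗ[ℝ] ℝ) (x : Fin d → ℝ) :
    (fun i => f (Pi.single i 1)) ⬝ᵥ x = f x := by
  have hx : x = ∑ i, x i • (Pi.single i (1:ℝ) : Fin d → ℝ) := by
    funext j
    simp [Pi.single_apply, Finset.sum_apply, mul_ite]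
  conv_rhs => rw [hx]
  rw [map_sum]
  simp [dotProduct, mul_comm]

lemma clm_eq_dotAux (f : (Fin d → ℝ) →L[ℝ] ℝ) (x : Fin d → ℝ) :
    (fun i => f (Pi.single i 1)) ⬝ᵥ x = f x := by
  have hx : x = ∑ i, x i • (Pi.single i (1:ℝ) : Fin d → ℝ) := by
    funext j
    simp [Pi.single_apply, Finset.sum_apply, mul_ite]
  conv_rhs => rw [hx]
  rw [map_sum]
  simp [dotProduct, mul_comm]

lemma sum_dotProductAux {ι : Type*} (s : Finset ι) (f : ι → Fin d → ℝ) (a : Fin d → ℝ) :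
    (∑ v ∈ s, f v) ⬝ᵥ a = ∑ v ∈ s, f v ⬝ᵥ a := by
  simp only [dotProduct, Finset.sum_apply, Finset.sum_mul]
  rw [Finset.sum_comm]

lemma dotProduct_sumAux {ι : Type*} (s : Finset ι) (f : ι → Fin d → ℝ) (a : Fin d → ℝ) :
    a ⬝ᵥ (∑ v ∈ s, f v) = ∑ v ∈ s, a ⬝ᵥ f v := by
  simp only [dotProduct, Finset.sum_apply, Finset.mul_sum]
  rw [Finset.sum_comm]

lemma polar_hullAux (V : Finset (Fin d → ℝ)) :
    polar (convexHull ℝ (V : Set (Fin d → ℝ))) = {x | ∀ v ∈ V, x ⬝ᵥ v ≤ 1} := by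
  ext x
  constructor
  · intro hx v hv
    exact hx v (subset_convexHull ℝ _ hv)
  · intro hx a ha
    have : convexHull ℝ (V : Set (Fin d → ℝ)) ⊆ {a | x ⬝ᵥ a ≤ 1} :=
      convexHull_min (fun v hv => hx v hv) (convex_halfSpace_le (isLinear_dlinAux x) 1)
    exact this ha

variable {U : Matrix (Fin d) (Fin d) ℝ}

lemma dot_mulVec_mulVecAux (hU : U ∈ Matrix.orthogonalGroup (Fin d) ℝ) (v x : Fin d → ℝ) :
    (U.mulVec v) ⬝ᵥ (U.mulVec x) = v ⬝ᵥ x := by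
  have h : Uᵀ * U = 1 := by
    have := (Matrix.mem_orthogonalGroup_iff' (Fin d) ℝ).mp hU
    simpa [Matrix.star_eq_conjTranspose] using this
  rw [Matrix.dotProduct_mulVec, ← Matrix.mulVec_transpose,
    Matrix.mulVec_mulVec, h, Matrix.one_mulVec]

lemma image_polar_hullAux (V : Finset (Fin d → ℝ)) (P : Set (Fin d → ℝ))
    (hP : P = convexHull ℝ (V : Set (Fin d → ℝ)))
    (hU : U ∈ Matrix.orthogonalGroup (Fin d) ℝ) :
    U.mulVec '' polar P = {y | ∀ v ∈ V, U.mulVec v ⬝ᵥ y ≤ 1} := by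
  have hUU : U * Uᵀ = 1 := by
    have := (Matrix.mem_orthogonalGroup_iff (Fin d) ℝ).mp hU
    simpa [Matrix.star_eq_conjTranspose] using this
  ext y
  constructor
  · rintro ⟨x, hx, rfl⟩ v hv
    rw [hP, polar_hullAux] at hx
    rw [dot_mulVec_mulVecAux hU, dotProduct_comm]
    exact hx v hv
  · intro hy
    refine ⟨Uᵀ.mulVec y, ?_, ?_⟩
    · rw [hP, polar_hullAux]
      intro v hv
      have : Uᵀ.mulVec y ⬝ᵥ v = U.mulVec v ⬝ᵥ y := by
        rw [Matrix.mulVec_transpose, ← Matrix.dotProduct_mulVec, dotProduct_comm]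
      rw [this]
      exact hy v hv
    · rw [Matrix.mulVec_mulVec, hUU, Matrix.one_mulVec]

/-- On a face of the polytope, any function that equals 1 on the vertices of the face
equals 1 everywhere on the face. -/
lemma dot_eq_one_of_faceAux (V : Finset (Fin d → ℝ)) (P : Set (Fin d → ℝ))
    (hP : P = convexHull ℝ (V : Set (Fin d → ℝ)))
    (a : Fin d → ℝ) (b : ℝ) (hval : ∀ x ∈ P, x ⬝ᵥ a ≤ b)
    {x : Fin d → ℝ} (hx : x ∈ P) (hxa : x ⬝ᵥ a = b)
    (u : Fin d → ℝ) (hu : ∀ w ∈ V, w ∈ P → w ⬝ᵥ a = b → u ⬝ᵥ w = 1) :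
    u ⬝ᵥ x = 1 := by
  rw [hP, Finset.convexHull_eq] at hx
  obtain ⟨w, hw0, hw1, hwx⟩ := hx
  rw [Finset.centerMass_eq_of_sum_1 _ _ hw1] at hwx
  simp only [id] at hwx
  have hface : ∀ v ∈ V, w v ≠ 0 → v ⬝ᵥ a = b := by
    intro v hv hwv
    by_contra hne
    have hvP : v ∈ P := hP ▸ subset_convexHull ℝ _ hv
    have hlt : v ⬝ᵥ a < b := lt_of_le_of_ne (hval v hvP) hne
    have hpos : 0 < w v := lt_of_le_of_ne (hw0 v hv) (Ne.symm hwv)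
    have hsum : ∑ y ∈ V, w y * (b - y ⬝ᵥ a) = 0 := by
      have h1 : ∑ y ∈ V, w y * (b - y ⬝ᵥ a) = b - x ⬝ᵥ a := by
        rw [← hwx, sum_dotProductAux]
        simp only [smul_dotProduct, smul_eq_mul, mul_sub]
        rw [Finset.sum_sub_distrib, ← Finset.sum_mul, hw1, one_mul]
      rw [h1, hxa, sub_self]
    have := (Finset.sum_eq_zero_iff_of_nonneg (fun y hy => by
      have hyP : y ∈ P := hP ▸ subset_convexHull ℝ _ hy
      exact mul_nonneg (hw0 y hy) (sub_nonneg.2 (hval y hyP)))).1 hsum v hv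
    nlinarith
  have hx' : u ⬝ᵥ x = ∑ v ∈ V, w v * (u ⬝ᵥ v) := by
    rw [← hwx, dotProduct_sumAux]
    simp [dotProduct_smul]
  rw [hx']
  have : ∀ v ∈ V, w v * (u ⬝ᵥ v) = w v := by
    intro v hv
    rcases eq_or_ne (w v) 0 with h | h
    · simp [h]
    · have hvP : v ∈ P := hP ▸ subset_convexHull ℝ _ hv
      rw [hu v hv hvP (hface v hv h), mul_one]
  rw [Finset.sum_congr rfl this, hw1]

/-- Supporting functional at a non-interior point of a convex set with `0` interior. -/
lemma exists_supportAux (P : Set (Fin d → ℝ)) (hconv : Convex ℝ P)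
    (h0 : 0 ∈ interior P) {z : Fin d → ℝ} (hz : z ∉ interior P) :
    ∃ a : Fin d → ℝ, (∀ x ∈ P, x ⬝ᵥ a ≤ 1) ∧ z ⬝ᵥ a = 1 := by
  obtain ⟨f, hf⟩ := geometric_hahn_banach_open_point (hconv.interior) isOpen_interior hz
  have hfz : 0 < f z := by simpa using hf 0 h0
  have hle : ∀ x ∈ P, f x ≤ f z := by
    intro x hx
    by_contra hgt
    push_neg at hgt
    have hfx : 0 < f x := lt_trans hfz hgt
    set s : ℝ := f z / f x with hs
    have hs0 : 0 < s := div_pos hfz hfx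
    have hs1 : s < 1 := (div_lt_one hfx).2 hgt
    set t : ℝ := (1 - s)/2 with ht
    have ht0 : 0 < t := by linarith
    have ht1 : t < 1 := by linarith
    have hmem : (1 - t) • x + t • (0 : Fin d → ℝ) ∈ interior P :=
      hconv.combo_self_interior_mem_interior hx h0 (by linarith) ht0 (by ring)
    have hlt2 := hf _ hmem
    rw [smul_zero, add_zero, f.map_smul, smul_eq_mul] at hlt2
    have h1t : s < 1 - t := by rw [ht]; linarith
    have hgt2 : (1 - t) * f x > f z := by
      calc f z = s * f x := by rw [hs]; field_simp
      _ < (1 - t) * f x := mul_lt_mul_of_pos_right h1t hfx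
    linarith
  refine ⟨(f z)⁻¹ • (fun i => f (Pi.single i 1)), ?_, ?_⟩
  · intro x hx
    rw [dotProduct_smul, smul_eq_mul, dotProduct_comm, clm_eq_dotAux]
    have := hle x hx
    rw [inv_mul_le_one₀ hfz]
    exact this
  · rw [dotProduct_smul, smul_eq_mul, dotProduct_comm, clm_eq_dotAux]
    field_simp

lemma exists_boundary_crossingAux (P : Set (Fin d → ℝ)) (hcl : IsClosed P)
    (h0 : 0 ∈ interior P) {y : Fin d → ℝ} (hy : y ∉ P) :
    ∃ t : ℝ, 0 < t ∧ t < 1 ∧ t • y ∈ P ∧ t • y ∉ interior P := by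
  have h0P : (0 : Fin d → ℝ) ∈ P := interior_subset h0
  have hy0 : y ≠ 0 := fun h => hy (h ▸ h0P)
  have hyn : 0 < ‖y‖ := norm_pos_iff.2 hy0
  obtain ⟨ε, hε, hball⟩ := Metric.mem_nhds_iff.1 (mem_interior_iff_mem_nhds.1 h0)
  set S : Set ℝ := {t ∈ Set.Icc (0:ℝ) 1 | t • y ∈ P} with hS
  have hSclosed : IsClosed S :=
    (isClosed_Icc.inter (hcl.preimage (continuous_id.smul continuous_const)))
  have hScompact : IsCompact S :=
    isCompact_Icc.of_isClosed_subset hSclosed (fun t ht => ht.1)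
  have hS0 : (0:ℝ) ∈ S := ⟨⟨le_refl 0, zero_le_one⟩, by simpa using h0P⟩
  set t := sSup S with htdef
  have htS : t ∈ S := hScompact.sSup_mem ⟨0, hS0⟩
  have hbdd : BddAbove S := hScompact.bddAbove
  have ht0 : 0 < t := by
    set t₀ : ℝ := min (ε / (2 * ‖y‖)) 1 with ht₀
    have h₀pos : 0 < t₀ := lt_min (by positivity) one_pos
    have ht₀S : t₀ ∈ S := by
      refine ⟨⟨h₀pos.le, min_le_right _ _⟩, hball ?_⟩
      rw [Metric.mem_ball, dist_zero_right, norm_smul, Real.norm_eq_abs,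
        abs_of_pos h₀pos]
      have : t₀ ≤ ε / (2 * ‖y‖) := min_le_left _ _
      calc t₀ * ‖y‖ ≤ ε / (2 * ‖y‖) * ‖y‖ := by nlinarith
      _ = ε / 2 := by field_simp
      _ < ε := by linarith
    exact lt_of_lt_of_le h₀pos (le_csSup hbdd ht₀S)
  have ht1 : t < 1 := by
    rcases lt_or_eq_of_le htS.1.2 with h | h
    · exact h
    · exact absurd (by simpa [h] using htS.2) hy
  refine ⟨t, ht0, ht1, htS.2, ?_⟩
  intro hint
  obtain ⟨r, hr, hball2⟩ := Metric.mem_nhds_iff.1 (mem_interior_iff_mem_nhds.1 hint)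
  set δ : ℝ := min ((1 - t)/2) (r / (2 * ‖y‖)) with hδ
  have hδpos : 0 < δ := lt_min (by linarith) (by positivity)
  have hmem : (t + δ) • y ∈ P := by
    apply hball2
    rw [Metric.mem_ball, dist_eq_norm, ← sub_smul, add_sub_cancel_left, norm_smul,
      Real.norm_eq_abs, abs_of_pos hδpos]
    have : δ ≤ r / (2 * ‖y‖) := min_le_right _ _
    calc δ * ‖y‖ ≤ r / (2 * ‖y‖) * ‖y‖ := by nlinarith
    _ = r / 2 := by field_simp
    _ < r := by linarith
  have : t + δ ∈ S := by
    refine ⟨⟨by linarith, ?_⟩, hmem⟩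
    have : δ ≤ (1 - t)/2 := min_le_left _ _
    linarith
  have := le_csSup hbdd this
  linarith

/-- Every non-interior point of the polytope lies on a facet-defining hyperplane. -/
lemma exists_facet_hyperplaneAux (V : Finset (Fin d → ℝ)) (P : Set (Fin d → ℝ))
    (hP : P = convexHull ℝ (V : Set (Fin d → ℝ))) (h0 : 0 ∈ interior P)
    {z : Fin d → ℝ} (hzP : z ∈ P) (hz : z ∉ interior P) :
    ∃ a : Fin d → ℝ, a ≠ 0 ∧ (∀ x ∈ P, x ⬝ᵥ a ≤ 1) ∧ z ⬝ᵥ a = 1 ∧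
      Module.finrank ℝ (affineSpan ℝ {x ∈ P | x ⬝ᵥ a = 1}).direction = d - 1 := by
  classical
  have hconv : Convex ℝ P := hP ▸ convex_convexHull ℝ _
  have hullbound : ∀ c : Fin d → ℝ, (∀ v ∈ V, v ⬝ᵥ c ≤ 1) → ∀ x ∈ P, x ⬝ᵥ c ≤ 1 := by
    intro c hc x hx
    rw [hP] at hx
    exact convexHull_min (fun v hv => hc v hv) (convex_halfSpace_le (isLinear_dotrAux c) 1) hx
  obtain ⟨a₀, ha₀P, ha₀z⟩ := exists_supportAux P hconv h0 hz
  set N : Set (Fin d → ℝ) := {c | (∀ v ∈ V, v ⬝ᵥ c ≤ 1) ∧ z ⬝ᵥ c = 1} with hN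
  have ha₀N : a₀ ∈ N := ⟨fun v hv => ha₀P v (hP ▸ subset_convexHull ℝ _ hv), ha₀z⟩
  have hNclosed : IsClosed N := by
    have : N = (⋂ v ∈ V, {c | v ⬝ᵥ c ≤ 1}) ∩ {c | z ⬝ᵥ c = 1} := by
      ext c; simp [hN]
    rw [this]
    refine IsClosed.inter (isClosed_biInter fun v _ => ?_) (isClosed_eq ?_ continuous_const)
    · exact isClosed_le ((dlinAux v).continuous_of_finiteDimensional) continuous_const
    · exact (dlinAux z).continuous_of_finiteDimensional
  obtain ⟨ε, hε, hball⟩ := Metric.mem_nhds_iff.1 (mem_interior_iff_mem_nhds.1 h0)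
  have hsingle : ∀ (i : Fin d) (s : ℝ), |s| < ε → (Pi.single i s : Fin d → ℝ) ∈ P := by
    intro i s hs
    apply hball
    rw [Metric.mem_ball, dist_zero_right]
    refine lt_of_le_of_lt ((pi_norm_le_iff_of_nonneg (abs_nonneg s)).2 (fun j => ?_)) hs
    rcases eq_or_ne j i with rfl | hji
    · simp
    · simp [Pi.single_apply, hji, abs_nonneg]
  have hNbdd : Bornology.IsBounded N := by
    refine isBounded_iff_forall_norm_le.2 ⟨2/ε, fun c hc => ?_⟩
    have hcP := hullbound c hc.1
    refine (pi_norm_le_iff_of_nonneg (by positivity)).2 (fun i => ?_)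
    have hpos2 := hcP _ (hsingle i (ε/2) (by rw [abs_of_pos (by linarith)]; linarith))
    have hneg2 := hcP _ (hsingle i (-(ε/2)) (by rw [abs_of_neg (by linarith)]; linarith))
    rw [single_dotProduct] at hpos2 hneg2
    rw [Real.norm_eq_abs, abs_le]
    constructor
    · rw [neg_le]
      rw [le_div_iff₀ hε]
      linarith
    · rw [le_div_iff₀ hε]
      linarith
  have hNcompact : IsCompact N := Metric.isCompact_iff_isClosed_bounded.2 ⟨hNclosed, hNbdd⟩
  obtain ⟨a, haN, hext⟩ := hNcompact.extremePoints_nonempty ⟨a₀, ha₀N⟩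
  have haP : ∀ x ∈ P, x ⬝ᵥ a ≤ 1 := hullbound a haN.1
  have haz : z ⬝ᵥ a = 1 := haN.2
  have ha0 : a ≠ 0 := by
    rintro rfl
    simp at haz
  set F : Set (Fin d → ℝ) := {x ∈ P | x ⬝ᵥ a = 1} with hF
  have hzF : z ∈ F := ⟨hzP, haz⟩
  have hspan : Submodule.span ℝ F = ⊤ := by
    by_contra hne
    obtain ⟨f, hf0, hfbot⟩ := Submodule.exists_dual_map_eq_bot_of_lt_top
      (lt_of_le_of_ne le_top hne) inferInstance
    set c : Fin d → ℝ := fun i => f (Pi.single i 1) with hcdef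
    have hc : ∀ x : Fin d → ℝ, c ⬝ᵥ x = f x := fun x => lin_eq_dotAux f x
    have hcF : ∀ x ∈ F, x ⬝ᵥ c = 0 := by
      intro x hx
      rw [dotProduct_comm, hc]
      have hmem : f x ∈ Submodule.map f (Submodule.span ℝ F) :=
        Submodule.mem_map_of_mem (Submodule.subset_span hx)
      rw [hfbot] at hmem
      simpa using hmem
    have hcne : c ≠ 0 := by
      intro h
      apply hf0
      ext x
      exact congrFun h x
    set T : Finset (Fin d → ℝ) := V.filter (fun v => ¬ (v ⬝ᵥ a = 1)) with hT
    set g : (Fin d → ℝ) → ℝ := fun v => (1 - v ⬝ᵥ a)/(|v ⬝ᵥ c| + 1) with hg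
    have hglt : ∀ v ∈ T, 0 < g v := by
      intro v hv
      rw [hT, Finset.mem_filter] at hv
      have hvP : v ∈ P := hP ▸ subset_convexHull ℝ _ hv.1
      have : v ⬝ᵥ a < 1 := lt_of_le_of_ne (haP v hvP) hv.2
      have : 0 < 1 - v ⬝ᵥ a := by linarith
      positivity
    set ε' : ℝ := if hTn : T.Nonempty then T.inf' hTn g else 1 with hε'
    have hε'pos : 0 < ε' := by
      rw [hε']
      split_ifs with hTn
      · exact (Finset.lt_inf'_iff hTn).2 (fun v hv => hglt v hv)
      · exact one_pos
    have hmemN : ∀ e : ℝ, |e| ≤ ε' → (a + e • c) ∈ N := by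
      intro e he
      constructor
      · intro v hv
        rw [dotProduct_add, dotProduct_smul, smul_eq_mul]
        rcases eq_or_ne (v ⬝ᵥ a) 1 with hva | hva
        · have hvF : v ∈ F := ⟨hP ▸ subset_convexHull ℝ _ hv, hva⟩
          rw [hcF v hvF, mul_zero, hva, add_zero]
        · have hvT : v ∈ T := by rw [hT, Finset.mem_filter]; exact ⟨hv, hva⟩
          have hTn : T.Nonempty := ⟨v, hvT⟩
          have hεg : ε' ≤ g v := by
            rw [hε', dif_pos hTn]
            exact Finset.inf'_le g hvT
          have habs : e * (v ⬝ᵥ c) ≤ |e| * |v ⬝ᵥ c| := by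
            calc e * (v ⬝ᵥ c) ≤ |e * (v ⬝ᵥ c)| := le_abs_self _
            _ = |e| * |v ⬝ᵥ c| := abs_mul _ _
          have hden : (0:ℝ) < |v ⬝ᵥ c| + 1 := by positivity
          have hgv : g v * (|v ⬝ᵥ c| + 1) = 1 - v ⬝ᵥ a := by
            rw [hg]; field_simp
          nlinarith [abs_nonneg (v ⬝ᵥ c), abs_nonneg e]
      · rw [dotProduct_add, dotProduct_smul, smul_eq_mul, hcF z hzF,
          mul_zero, add_zero, haz]
    have h₁ : a + ε' • c ∈ N := hmemN ε' (by rw [abs_of_pos hε'pos])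
    have h₂ : a - ε' • c ∈ N := by
      have := hmemN (-ε') (by rw [abs_neg, abs_of_pos hε'pos])
      simpa [sub_eq_add_neg, neg_smul] using this
    have hseg : a ∈ openSegment ℝ (a - ε' • c) (a + ε' • c) := by
      refine ⟨1/2, 1/2, by norm_num, by norm_num, by norm_num, ?_⟩
      module
    obtain ⟨hA, hB⟩ := (mem_extremePoints (𝕜 := ℝ) (A := N) (x := a)).1 ⟨haN, hext⟩ |>.2 _ h₂ _ h₁ hseg
    have : ε' • c = 0 := by
      have := hB
      rw [add_eq_left] at this
      exact this
    rcases smul_eq_zero.1 this with h | h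
    · exact absurd h (ne_of_gt hε'pos)
    · exact hcne h
  have hd1 : 1 ≤ d := by
    by_contra hd
    push_neg at hd
    interval_cases d
    exact ha0 (funext (fun i => i.elim0))
  set la : (Fin d → ℝ) →ₗ[ℝ] ℝ := dlinrAux a with hla
  have hla_apply : ∀ x, la x = x ⬝ᵥ a := fun _ => rfl
  have hrange : LinearMap.range la = ⊤ := by
    rw [LinearMap.range_eq_top]
    intro r
    have haa : (0:ℝ) < a ⬝ᵥ a := by
      have h1 : a ⬝ᵥ a ≠ 0 := fun h => ha0 (dotProduct_self_eq_zero.1 h)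
      have h2 : (0:ℝ) ≤ a ⬝ᵥ a := Finset.sum_nonneg fun i _ => mul_self_nonneg (a i)
      exact lt_of_le_of_ne h2 (Ne.symm h1)
    refine ⟨(r / (a ⬝ᵥ a)) • a, ?_⟩
    rw [hla_apply, smul_dotProduct, smul_eq_mul]
    field_simp
  have hker : finrank ℝ (LinearMap.ker la) = d - 1 := by
    have h1 := la.finrank_range_add_finrank_ker
    rw [hrange, finrank_top, Module.finrank_pi, Fintype.card_fin] at h1
    have : finrank ℝ ℝ = 1 := Module.finrank_self ℝ
    omega
  have hupper : finrank ℝ (affineSpan ℝ F).direction ≤ d - 1 := by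
    have hsub : affineSpan ℝ F ≤ AffineSubspace.mk' z (LinearMap.ker la) := by
      rw [affineSpan_le]
      intro x hx
      rw [SetLike.mem_coe, AffineSubspace.mem_mk', LinearMap.mem_ker]
      have : la (x - z) = 0 := by
        rw [map_sub, hla_apply, hla_apply, hx.2, haz, sub_self]
      simpa using this
    have := AffineSubspace.direction_le hsub
    rw [AffineSubspace.direction_mk'] at this
    calc finrank ℝ (affineSpan ℝ F).direction ≤ finrank ℝ (LinearMap.ker la) :=
      Submodule.finrank_mono this
    _ = d - 1 := hker
  have hlower : d ≤ finrank ℝ (affineSpan ℝ F).direction + 1 := by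
    set W := (affineSpan ℝ F).direction with hW
    have hsub : Submodule.span ℝ F ≤ W ⊔ Submodule.span ℝ {z} := by
      rw [Submodule.span_le]
      intro x hx
      have hxz : x - z ∈ W := by
        have h1 : x ∈ affineSpan ℝ F := subset_affineSpan ℝ F hx
        have h2 : z ∈ affineSpan ℝ F := subset_affineSpan ℝ F hzF
        have := AffineSubspace.vsub_mem_direction h1 h2
        simpa using this
      have : x = (x - z) + z := by ring
      rw [SetLike.mem_coe, this]
      exact Submodule.add_mem _ (Submodule.mem_sup_left hxz)
        (Submodule.mem_sup_right (Submodule.mem_span_singleton_self z))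
    have h1 : (d:ℕ) = finrank ℝ (Submodule.span ℝ F) := by
      rw [hspan, finrank_top, Module.finrank_pi, Fintype.card_fin]
    have h2 : finrank ℝ (Submodule.span ℝ F) ≤
        finrank ℝ (W ⊔ Submodule.span ℝ {z} : Submodule ℝ (Fin d → ℝ)) :=
      Submodule.finrank_mono hsub
    have h3 : finrank ℝ (W ⊔ Submodule.span ℝ {z} : Submodule ℝ (Fin d → ℝ)) ≤
        finrank ℝ W + finrank ℝ (Submodule.span ℝ ({z} : Set (Fin d → ℝ))) :=
      Submodule.finrank_add_le_finrank_add_finrank _ _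
    have h4 : finrank ℝ (Submodule.span ℝ ({z} : Set (Fin d → ℝ))) ≤ 1 := by
      rcases eq_or_ne z 0 with rfl | hz0
      · rw [Submodule.span_zero_singleton]
        simp
      · rw [finrank_span_singleton hz0]
    omega
  refine ⟨a, ha0, haP, haz, ?_⟩
  rw [← hF]
  omega

end Aux

theorem selfPolar_iff_vertex_conditions {d : ℕ} (V : Finset (Fin d → ℝ))
    (P : Set (Fin d → ℝ)) (hP : P = convexHull ℝ (V : Set (Fin d → ℝ)))
    (hmin : ∀ v ∈ V, v ∉ convexHull ℝ ((V : Set (Fin d → ℝ)) \ {v}))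
    (h0 : 0 ∈ interior P)
    (U : Matrix (Fin d) (Fin d) ℝ) (hU : U ∈ Matrix.orthogonalGroup (Fin d) ℝ) :
    P = U.mulVec '' polar P ↔
      ((∀ v ∈ V, ∀ w ∈ V, U.mulVec v ⬝ᵥ w ≤ 1) ∧
        ∀ F : Set (Fin d → ℝ), IsFacet P F →
          ∃ v ∈ V, ∀ w ∈ V, w ∈ F → U.mulVec v ⬝ᵥ w = 1) := by
  classical
  have hconv : Convex ℝ P := hP ▸ convex_convexHull ℝ _
  have hcl : IsClosed P := hP ▸ (V.finite_toSet.isCompact_convexHull ℝ).isClosed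
  have hVsub : ∀ v ∈ V, v ∈ P := fun v hv => hP ▸ subset_convexHull ℝ _ hv
  rw [image_polar_hullAux V P hP hU]
  constructor
  · intro hPQ
    constructor
    · intro v hv w hw
      have hwQ : w ∈ {y | ∀ v ∈ V, U.mulVec v ⬝ᵥ y ≤ 1} := hPQ ▸ hVsub w hw
      exact hwQ v hv
    · rintro F ⟨a, ha0, b, hval, hFdef, hdim⟩
      have hVne : V.Nonempty := by
        by_contra h
        rw [Finset.not_nonempty_iff_eq_empty] at h
        have hPe : P = ∅ := by rw [hP, h]; simp
        rw [hPe] at h0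
        simp at h0
      by_contra hcon
      push_neg at hcon
      have hchoice : ∀ v ∈ V, ∃ x : Fin d → ℝ, x ∈ F ∧ U.mulVec v ⬝ᵥ x < 1 := by
        intro v hv
        obtain ⟨w, hwV, hwF, hne⟩ := hcon v hv
        refine ⟨w, hwF, lt_of_le_of_ne ?_ hne⟩
        have hwQ : w ∈ {y | ∀ v ∈ V, U.mulVec v ⬝ᵥ y ≤ 1} := hPQ ▸ hVsub w hwV
        exact hwQ v hv
      choose! g hg1 hg2 using hchoice
      have hcard : (0:ℝ) < (V.card : ℝ) := by
        exact_mod_cast Finset.card_pos.2 hVne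
      set xbar : Fin d → ℝ := ∑ v ∈ V, ((V.card : ℝ))⁻¹ • g v with hxbar
      have hsum1 : ∑ _v ∈ V, ((V.card : ℝ))⁻¹ = 1 := by
        rw [Finset.sum_const, nsmul_eq_mul]
        field_simp
      have hgF : ∀ v ∈ V, g v ∈ F := fun v hv => hg1 v hv
      have hFconv : Convex ℝ F := by
        rw [hFdef]
        exact hconv.inter (convex_hyperplane (isLinear_dotrAux a) b)
      have hxF : xbar ∈ F :=
        hFconv.sum_mem (fun v _ => by positivity) hsum1 hgF
      have hxstrict : ∀ v ∈ V, U.mulVec v ⬝ᵥ xbar < 1 := by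
        intro v hv
        rw [hxbar, dotProduct_sumAux]
        have hterm : ∀ w ∈ V, U.mulVec v ⬝ᵥ (((V.card : ℝ))⁻¹ • g w) =
            ((V.card : ℝ))⁻¹ * (U.mulVec v ⬝ᵥ g w) := by
          intro w _
          rw [dotProduct_smul, smul_eq_mul]
        rw [Finset.sum_congr rfl hterm]
        have hlt : ∑ w ∈ V, ((V.card : ℝ))⁻¹ * (U.mulVec v ⬝ᵥ g w) <
            ∑ _w ∈ V, ((V.card : ℝ))⁻¹ := by
          refine Finset.sum_lt_sum (fun w hw => ?_) ⟨v, hv, ?_⟩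
          · have hgw : g w ∈ F := hgF w hw
            have hgwP : g w ∈ P := by
              rw [hFdef] at hgw
              exact hgw.1
            have hgwQ : g w ∈ {y | ∀ v ∈ V, U.mulVec v ⬝ᵥ y ≤ 1} := hPQ ▸ hgwP
            have := hgwQ v hv
            have hinv : (0:ℝ) < ((V.card : ℝ))⁻¹ := by positivity
            nlinarith
          · have := hg2 v hv
            have hinv : (0:ℝ) < ((V.card : ℝ))⁻¹ := by positivity
            nlinarith
        calc ∑ w ∈ V, ((V.card : ℝ))⁻¹ * (U.mulVec v ⬝ᵥ g w)
            < ∑ _w ∈ V, ((V.card : ℝ))⁻¹ := hlt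
        _ = 1 := hsum1
      -- xbar is interior, contradiction with being on the facet hyperplane
      have hO : IsOpen {y : Fin d → ℝ | ∀ v ∈ V, U.mulVec v ⬝ᵥ y < 1} := by
        have : {y : Fin d → ℝ | ∀ v ∈ V, U.mulVec v ⬝ᵥ y < 1} =
            ⋂ v ∈ V, {y | U.mulVec v ⬝ᵥ y < 1} := by
          ext y; simp
        rw [this]
        exact isOpen_biInter_finset (fun v _ =>
          isOpen_lt ((dlinAux (U.mulVec v)).continuous_of_finiteDimensional) continuous_const)
      have hOP : {y : Fin d → ℝ | ∀ v ∈ V, U.mulVec v ⬝ᵥ y < 1} ⊆ P := by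
        intro y hy
        rw [hPQ]
        exact fun v hv => (hy v hv).le
      have hxint : xbar ∈ interior P :=
        (hO.subset_interior_iff.2 hOP) hxstrict
      obtain ⟨r, hr, hball⟩ := Metric.mem_nhds_iff.1 (mem_interior_iff_mem_nhds.1 hxint)
      have hna : 0 < ‖a‖ := norm_pos_iff.2 ha0
      have haa : (0:ℝ) < a ⬝ᵥ a := by
        have h1 : a ⬝ᵥ a ≠ 0 := fun h => ha0 (dotProduct_self_eq_zero.1 h)
        have h2 : (0:ℝ) ≤ a ⬝ᵥ a := Finset.sum_nonneg fun i _ => mul_self_nonneg (a i)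
        exact lt_of_le_of_ne h2 (Ne.symm h1)
      set p : Fin d → ℝ := xbar + (r / (2 * ‖a‖)) • a with hp
      have hpP : p ∈ P := by
        apply hball
        rw [Metric.mem_ball, dist_eq_norm, hp, add_sub_cancel_left, norm_smul,
          Real.norm_eq_abs, abs_of_pos (by positivity)]
        have : r / (2 * ‖a‖) * ‖a‖ = r / 2 := by field_simp
        rw [this]
        linarith
      have hxa : xbar ⬝ᵥ a = b := by
        rw [hFdef] at hxF
        exact hxF.2
      have hpa : p ⬝ᵥ a = b + (r / (2 * ‖a‖)) * (a ⬝ᵥ a) := by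
        rw [hp, add_dotProduct, smul_dotProduct, smul_eq_mul, hxa]
      have := hval p hpP
      rw [hpa] at this
      have hpos : 0 < (r / (2 * ‖a‖)) * (a ⬝ᵥ a) := by positivity
      linarith
  · rintro ⟨h1, h2⟩
    apply Set.Subset.antisymm
    · rw [hP]
      apply convexHull_min
      · intro w hw v hv
        exact h1 v hv w hw
      · intro y1 hy1 y2 hy2 s t hs ht hst v hv
        simp only [Set.mem_setOf_eq] at hy1 hy2 ⊢
        rw [dotProduct_add, dotProduct_smul, dotProduct_smul,
          smul_eq_mul, smul_eq_mul]
        nlinarith [hy1 v hv, hy2 v hv]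
    · intro y hy
      by_contra hyP
      obtain ⟨t, ht0, ht1, hzP, hz⟩ := exists_boundary_crossingAux P hcl h0 hyP
      obtain ⟨a, ha0, haP, haz, hdim⟩ := exists_facet_hyperplaneAux V P hP h0 hzP hz
      have hfacet : IsFacet P {x ∈ P | x ⬝ᵥ a = 1} := ⟨a, ha0, 1, haP, rfl, hdim⟩
      obtain ⟨v, hvV, hv1⟩ := h2 _ hfacet
      have hUv : U.mulVec v ⬝ᵥ (t • y) = 1 := by
        apply dot_eq_one_of_faceAux V P hP a 1 haP hzP haz
        intro w hwV hwP hwa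
        exact hv1 w hwV ⟨hwP, hwa⟩
      rw [dotProduct_smul, smul_eq_mul] at hUv
      have hle : U.mulVec v ⬝ᵥ y ≤ 1 := hy v hvV
      nlinarith
end
end

section
/- Let P be a d-dimensional polytope in ℝ^d with 0 in its interior, self-polar by orthogonal transformation U (P = U P°). Fix a ≠ 0 and let Q ⊆ ℝ^{d+1} be the convex hull of the points (√(1+a²) v ; a) for v a vertex of P together with the apex (0,…,0, −1/a). Then Q = W Q°, where W is the block-diagonal orthogonal transformation with blocks U and −1. -/
open Matrix

noncomputable section

lemma halfspace_convex {d : ℕ} (x : Fin d → ℝ) (r : ℝ) :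
    Convex ℝ {w : Fin d → ℝ | x ⬝ᵥ w ≤ r} :=
  convex_halfSpace_le ⟨dotProduct_add x, fun c v => dotProduct_smul c x v⟩ r

lemma dot_le_of_hull {d : ℕ} {S : Set (Fin d → ℝ)} {x : Fin d → ℝ} {r : ℝ}
    (h : ∀ v ∈ S, x ⬝ᵥ v ≤ r) : ∀ q ∈ convexHull ℝ S, x ⬝ᵥ q ≤ r :=
  fun _ hq => convexHull_min h (halfspace_convex x r) hq

lemma polar_convexHull {d : ℕ} (S : Set (Fin d → ℝ)) :
    polar (convexHull ℝ S) = polar S := by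
  ext x
  constructor
  · intro hx v hv
    exact hx v (subset_convexHull ℝ S hv)
  · intro hx q hq
    exact dot_le_of_hull hx q hq

lemma polar_convex {d : ℕ} (S : Set (Fin d → ℝ)) : Convex ℝ (polar S) := by
  intro p hp q hq c1 c2 hc1 hc2 hsum
  intro v hv
  have h1 := hp v hv
  have h2 := hq v hv
  have : (c1 • p + c2 • q) ⬝ᵥ v = c1 * (p ⬝ᵥ v) + c2 * (q ⬝ᵥ v) := by
    rw [add_dotProduct, smul_dotProduct, smul_dotProduct]; rfl
  rw [this]
  nlinarith

lemma snoc_dot {d : ℕ} (x x' : Fin d → ℝ) (y y' : ℝ) :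
    (Fin.snoc x y : Fin (d+1) → ℝ) ⬝ᵥ (Fin.snoc x' y') = x ⬝ᵥ x' + y * y' := by
  simp [dotProduct, Fin.sum_univ_castSucc]

theorem pyramid_selfPolar {d : ℕ} (V : Finset (Fin d → ℝ))
    (P : Set (Fin d → ℝ)) (hP : P = convexHull ℝ (V : Set (Fin d → ℝ)))
    (h0 : 0 ∈ interior P)
    (U : Matrix (Fin d) (Fin d) ℝ) (hU : U ∈ Matrix.orthogonalGroup (Fin d) ℝ)
    (hself : P = U.mulVec '' polar P)
    (a : ℝ) (ha : a ≠ 0)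
    (Q : Set (Fin (d + 1) → ℝ))
    (hQ : Q = convexHull ℝ
      ((fun v : Fin d → ℝ => Fin.snoc (Real.sqrt (1 + a ^ 2) • v) a) '' (V : Set (Fin d → ℝ)) ∪
        {Fin.snoc (0 : Fin d → ℝ) (-1 / a)}))
    (W : (Fin (d + 1) → ℝ) → (Fin (d + 1) → ℝ))
    (hW : ∀ x, W x = Fin.snoc (U.mulVec (x ∘ Fin.castSucc)) (-(x (Fin.last d)))) :
    Q = W '' polar Q := by
  have ha2 : (0:ℝ) < 1 + a ^ 2 := by positivity
  set s : ℝ := Real.sqrt (1 + a ^ 2) with hs_def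
  have hs2 : s ^ 2 = 1 + a ^ 2 := Real.sq_sqrt ha2.le
  have hs0 : 0 < s := Real.sqrt_pos.mpr ha2
  set apex : Fin (d+1) → ℝ := Fin.snoc (0 : Fin d → ℝ) (-1/a) with hapex
  set f : (Fin d → ℝ) → (Fin (d+1) → ℝ) := fun v => Fin.snoc (s • v) a with hf
  set gens : Set (Fin (d+1) → ℝ) := f '' (V : Set (Fin d → ℝ)) ∪ {apex} with hgens
  have hQg : Q = convexHull ℝ gens := hQ
  have hpolarQ : polar Q = polar gens := by rw [hQg, polar_convexHull]
  -- W is linear-ish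
  have hWcomb : ∀ (c1 c2 : ℝ) (p1 p2 : Fin (d+1) → ℝ),
      W (c1 • p1 + c2 • p2) = c1 • W p1 + c2 • W p2 := by
    intro c1 c2 p1 p2
    rw [hW, hW, hW]
    funext i
    refine Fin.lastCases ?_ ?_ i
    · simp [Fin.snoc_last]
      ring
    · intro j
      have hcomp : (c1 • p1 + c2 • p2) ∘ Fin.castSucc
          = c1 • (p1 ∘ Fin.castSucc) + c2 • (p2 ∘ Fin.castSucc) := rfl
      simp [Fin.snoc_castSucc, hcomp, Matrix.mulVec_add, Matrix.mulVec_smul]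
  -- membership of apex in Q
  have hapexQ : apex ∈ Q := by
    rw [hQg]; exact subset_convexHull ℝ gens (Set.mem_union_right _ rfl)
  apply Set.Subset.antisymm
  · -- Q ⊆ W '' polar Q
    rw [hQg]
    apply convexHull_min
    · rintro g (⟨v, hv, rfl⟩ | rfl)
      · -- vertex generator
        have hvP : v ∈ P := hP ▸ subset_convexHull ℝ _ hv
        obtain ⟨z, hz, hvz⟩ : ∃ z ∈ polar P, U.mulVec z = v := by
          rw [hself] at hvP; exact hvP
        refine ⟨Fin.snoc (s • z) (-a), ?_, ?_⟩
        · rw [polar_convexHull]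
          rintro g' (⟨w, hw, rfl⟩ | rfl)
          · have hwP : w ∈ P := hP ▸ subset_convexHull ℝ _ hw
            have hzw : z ⬝ᵥ w ≤ 1 := hz w hwP
            show (Fin.snoc (s • z) (-a) : Fin (d+1) → ℝ) ⬝ᵥ f w ≤ 1
            rw [hf, snoc_dot]
            have : (s • z) ⬝ᵥ (s • w) = s ^ 2 * (z ⬝ᵥ w) := by
              rw [smul_dotProduct, dotProduct_smul, smul_eq_mul, smul_eq_mul]; ring
            rw [this, hs2]
            nlinarith
          · show (Fin.snoc (s • z) (-a) : Fin (d+1) → ℝ) ⬝ᵥ apex ≤ 1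
            rw [hapex, snoc_dot, dotProduct_zero]
            have : (-a) * (-1/a) = 1 := by field_simp
            rw [this]; norm_num
        · rw [hW]
          have h1 : (Fin.snoc (s • z) (-a) : Fin (d+1) → ℝ) ∘ Fin.castSucc = s • z := by
            funext j; simp [Fin.snoc_castSucc]
          have h2 : (Fin.snoc (s • z) (-a) : Fin (d+1) → ℝ) (Fin.last d) = -a := by
            simp [Fin.snoc_last]
          rw [h1, h2, Matrix.mulVec_smul, hvz, neg_neg]
      · -- apex generator
        refine ⟨Fin.snoc (0 : Fin d → ℝ) (1/a), ?_, ?_⟩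
        · rw [polar_convexHull]
          rintro g' (⟨w, hw, rfl⟩ | rfl)
          · show (Fin.snoc (0:Fin d → ℝ) (1/a) : Fin (d+1) → ℝ) ⬝ᵥ f w ≤ 1
            rw [hf, snoc_dot, zero_dotProduct]
            have : (1/a) * a = 1 := by field_simp
            rw [this]; norm_num
          · show (Fin.snoc (0:Fin d → ℝ) (1/a) : Fin (d+1) → ℝ) ⬝ᵥ apex ≤ 1
            rw [hapex, snoc_dot, zero_dotProduct]
            have h1 : (1/a) * (-1/a) = -(1/a^2) := by field_simp
            rw [h1]
            have : (0:ℝ) < 1/a^2 := by positivity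
            linarith
        · rw [hW]
          have h1 : (Fin.snoc (0:Fin d → ℝ) (1/a) : Fin (d+1) → ℝ) ∘ Fin.castSucc
              = (0 : Fin d → ℝ) := by funext j; simp [Fin.snoc_castSucc]
          have h2 : (Fin.snoc (0:Fin d → ℝ) (1/a) : Fin (d+1) → ℝ) (Fin.last d) = 1/a := by
            simp [Fin.snoc_last]
          rw [h1, h2, Matrix.mulVec_zero, hapex, neg_div]
    · -- convexity of W '' polar Q
      rintro _ ⟨p1, hp1, rfl⟩ _ ⟨p2, hp2, rfl⟩ c1 c2 hc1 hc2 hsum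
      exact ⟨c1 • p1 + c2 • p2, polar_convex _ hp1 hp2 hc1 hc2 hsum, hWcomb c1 c2 p1 p2⟩
  · -- W '' polar Q ⊆ Q
    rintro _ ⟨p, hp, rfl⟩
    set x : Fin d → ℝ := p ∘ Fin.castSucc with hx
    set y : ℝ := p (Fin.last d) with hy
    rw [hpolarQ] at hp
    have hA : ∀ v ∈ (V : Set (Fin d → ℝ)), s * (x ⬝ᵥ v) + y * a ≤ 1 := by
      intro v hv
      have := hp (f v) (Set.mem_union_left _ ⟨v, hv, rfl⟩)
      have hpd : p ⬝ᵥ f v = s * (x ⬝ᵥ v) + y * a := by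
        conv_lhs => rw [← Fin.snoc_init_self p]
        rw [hf, snoc_dot, dotProduct_smul]
        rfl
      rw [hpd] at this
      exact this
    have hB : y * (-1/a) ≤ 1 := by
      have := hp apex (Set.mem_union_right _ rfl)
      have hpd : p ⬝ᵥ apex = y * (-1/a) := by
        conv_lhs => rw [← Fin.snoc_init_self p]
        rw [hapex, snoc_dot, dotProduct_zero, zero_add]
      rw [hpd] at this
      exact this
    -- the parameter t
    set t : ℝ := (1 - a * y) / (1 + a ^ 2) with ht_def
    have hxv : ∀ v ∈ (V : Set (Fin d → ℝ)), x ⬝ᵥ v ≤ (1 - a * y) / s := by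
      intro v hv
      rw [le_div_iff₀ hs0]
      nlinarith [hA v hv]
    have hxP : ∀ q ∈ P, x ⬝ᵥ q ≤ (1 - a * y) / s := by
      rw [hP]; exact dot_le_of_hull hxv
    have h0P : (0 : Fin d → ℝ) ∈ P := interior_subset h0
    have hge : 0 ≤ 1 - a * y := by
      have h1 : 0 ≤ (1 - a * y) / s := by
        have := hxP 0 h0P
        rwa [dotProduct_zero] at this
      have h2 := mul_nonneg h1 hs0.le
      rwa [div_mul_cancel₀ _ hs0.ne'] at h2
    have ht0 : 0 ≤ t := div_nonneg hge ha2.le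
    have ht1 : t ≤ 1 := by
      rw [ht_def, div_le_one ha2]
      have h := mul_le_mul_of_nonneg_left hB (sq_nonneg a)
      have h2 : a ^ 2 * (y * (-1/a)) = -(a * y) := by field_simp
      rw [h2, mul_one] at h
      linarith
    by_cases hcase : 1 - a * y = 0
    · -- degenerate: W p = apex
      have hx0 : x = 0 := by
        have hle : ∀ q ∈ P, x ⬝ᵥ q ≤ 0 := by
          intro q hq
          have := hxP q hq
          rw [hcase] at this
          simpa using this
        obtain ⟨ε, hε, hball⟩ : ∃ ε > 0, Metric.ball (0 : Fin d → ℝ) ε ⊆ P := by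
          obtain ⟨ε, hε, hball⟩ := Metric.isOpen_iff.mp isOpen_interior 0 h0
          exact ⟨ε, hε, hball.trans interior_subset⟩
        by_contra hxne
        have hxx : 0 < x ⬝ᵥ x := by
          rcases lt_or_eq_of_le (Finset.sum_nonneg fun i _ => mul_self_nonneg (x i) : (0:ℝ) ≤ x ⬝ᵥ x) with h | h
          · exact h
          · exact absurd (dotProduct_self_eq_zero.mp h.symm) hxne
        set c : ℝ := ε / (2 * (‖x‖ + 1)) with hc
        have hc0 : 0 < c := by positivity
        have hmem : c • x ∈ P := by
          apply hball
          rw [Metric.mem_ball, dist_zero_right, norm_smul, Real.norm_eq_abs,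
            abs_of_pos hc0]
          have h1 : ‖x‖ < ‖x‖ + 1 := by linarith
          calc c * ‖x‖ ≤ c * (‖x‖ + 1) := by nlinarith [norm_nonneg x]
            _ = ε / 2 := by
                  have hne : ‖x‖ + 1 ≠ 0 := by positivity
                  rw [hc]; field_simp
            _ < ε := by linarith
        have := hle (c • x) hmem
        rw [dotProduct_smul, smul_eq_mul] at this
        nlinarith
      have hWp : W p = apex := by
        rw [hW, ← hx, hx0, Matrix.mulVec_zero, hapex]
        have hy1 : y = 1 / a := by
          field_simp
          linarith [hcase]
        congr 1
        rw [← hy, hy1, neg_div]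
      rw [hWp]; exact hapexQ
    · -- main case: t > 0
      have hgt : 0 < 1 - a * y := lt_of_le_of_ne hge (Ne.symm hcase)
      have htpos : 0 < t := div_pos hgt ha2
      have hts : 0 < t * s := mul_pos htpos hs0
      -- (1/(t*s)) • x ∈ polar P
      have hz : (1/(t*s)) • x ∈ polar P := by
        intro q hq
        rw [smul_dotProduct]
        have hq' : x ⬝ᵥ q ≤ t * s := by
          have := hxP q hq
          have hkey : (1 - a * y) / s = t * s := by
            rw [ht_def, ← hs2]
            field_simp
          rw [hkey] at this
          exact this
        calc (1/(t*s)) • (x ⬝ᵥ q) ≤ (1/(t*s)) * (t*s) := by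
              have : (1/(t*s)) • (x ⬝ᵥ q) = (1/(t*s)) * (x ⬝ᵥ q) := rfl
              rw [this]
              apply mul_le_mul_of_nonneg_left hq' (by positivity)
          _ = 1 := by field_simp
      set q0 : Fin d → ℝ := U.mulVec ((1/(t*s)) • x) with hq0
      have hq0P : q0 ∈ P := by rw [hself]; exact ⟨_, hz, rfl⟩
      -- f q0 ∈ Q
      have hfq0 : f q0 ∈ Q := by
        have hmem : q0 ∈ convexHull ℝ (V : Set (Fin d → ℝ)) := hP ▸ hq0P
        let L : (Fin d → ℝ) →ₗ[ℝ] (Fin (d+1) → ℝ) :=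
          { toFun := fun v => Fin.snoc (s • v) 0
            map_add' := by
              intro u v
              funext i
              refine Fin.lastCases ?_ ?_ i <;>
                simp [Fin.snoc_last, Fin.snoc_castSucc, mul_add]
            map_smul' := by
              intro c v
              funext i
              refine Fin.lastCases ?_ ?_ i
              · simp [Fin.snoc_last]
              · intro j
                simp [Fin.snoc_castSucc]
                ring }
        let F : (Fin d → ℝ) →ᵃ[ℝ] (Fin (d+1) → ℝ) :=
          { toFun := f
            linear := L
            map_vadd' := by
              intro p v
              funext i
              refine Fin.lastCases ?_ ?_ i <;>
                simp [L, hf, Fin.snoc_last, Fin.snoc_castSucc, mul_add, vadd_eq_add] }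
        have himg : f q0 ∈ convexHull ℝ (f '' (V : Set (Fin d → ℝ))) := by
          have : (⇑F) '' (convexHull ℝ (V : Set (Fin d → ℝ)))
              = convexHull ℝ ((⇑F) '' (V : Set (Fin d → ℝ))) :=
            AffineMap.image_convexHull F _
          have hFf : ⇑F = f := rfl
          rw [hFf] at this
          rw [← this]
          exact ⟨q0, hmem, rfl⟩
        rw [hQg]
        exact convexHull_mono Set.subset_union_left himg
      -- W p = t • f q0 + (1-t) • apex
      have hWp : W p = t • f q0 + (1 - t) • apex := by
        rw [hW]
        funext i
        refine Fin.lastCases ?_ ?_ i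
        · rw [Fin.snoc_last]
          have h1 : (t • f q0 + (1-t) • apex) (Fin.last d)
              = t * a + (1-t) * (-1/a) := by
            simp [hf, hapex, Fin.snoc_last]
          have hh : t * (1 + a ^ 2) = 1 - a * y := by
            rw [ht_def, div_mul_cancel₀ _ ha2.ne']
          rw [h1, ← hy]
          field_simp
          linear_combination -hh
        · intro j
          rw [Fin.snoc_castSucc]
          have h1 : (t • f q0 + (1-t) • apex) (Fin.castSucc j)
              = t * (s * q0 j) + (1-t) * 0 := by
            simp [hf, hapex, Fin.snoc_castSucc]
          rw [h1, hq0, Matrix.mulVec_smul]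
          have : t * (s * ((1/(t*s)) • U.mulVec x) j) = U.mulVec x j := by
            have h2 : ((1/(t*s)) • U.mulVec x) j = (1/(t*s)) * U.mulVec x j := rfl
            rw [h2]
            field_simp
          rw [this, ← hx]
          ring
      rw [hWp]
      exact (hQg ▸ convex_convexHull ℝ gens) hfq0 hapexQ ht0 (by linarith) (by ring)
end
end

section
/- Let U be an orthogonal transformation of ℝ^d and P ⊆ ℝ^d a set with P = U P°. Suppose x ∈ ℝ^d satisfies U² x = x and [(P ∩ U x°) ∪ {x}] = [P ∪ {x}] ∩ U x°, where [A] denotes the closed convex hull of A ∪ {0} and x° = {y : ⟨y, x⟩ ≤ 1}. Then the set Q = [P ∪ {x}] ∩ U x° satisfies Q = U Q°. -/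
open Matrix

noncomputable section

/-- `[A]`: the closure of the convex hull of `A ∪ {0}`. -/
def cl {d : ℕ} (A : Set (Fin d → ℝ)) : Set (Fin d → ℝ) :=
  closure (convexHull ℝ (A ∪ {0}))

namespace AddCutAux

variable {d : ℕ}

lemma continuous_dotL (a : Fin d → ℝ) : Continuous fun y : Fin d → ℝ => y ⬝ᵥ a := by
  unfold dotProduct
  exact continuous_finset_sum _ fun i _ => (continuous_apply i).mul continuous_const

lemma isLinear_dotR (y : Fin d → ℝ) : IsLinearMap ℝ (fun a : Fin d → ℝ => y ⬝ᵥ a) :=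
  ⟨fun a b => dotProduct_add y a b, fun c a => dotProduct_smul c y a⟩

lemma polar_anti {A B : Set (Fin d → ℝ)} (h : A ⊆ B) : polar B ⊆ polar A :=
  fun y hy a ha => hy a (h ha)

lemma zero_mem_polar (A : Set (Fin d → ℝ)) : (0 : Fin d → ℝ) ∈ polar A :=
  fun a _ => by simp

lemma convex_polar (A : Set (Fin d → ℝ)) : Convex ℝ (polar A) := by
  intro y hy z hz s t hs ht hst a ha
  have h1 := hy a ha
  have h2 := hz a ha
  have : (s • y + t • z) ⬝ᵥ a = s * (y ⬝ᵥ a) + t * (z ⬝ᵥ a) := by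
    rw [add_dotProduct, smul_dotProduct, smul_dotProduct]; rfl
  rw [this]
  nlinarith

lemma isClosed_polar (A : Set (Fin d → ℝ)) : IsClosed (polar A) := by
  have : polar A = ⋂ a ∈ A, {y : Fin d → ℝ | y ⬝ᵥ a ≤ 1} := by
    ext y; simp [polar]
  rw [this]
  exact isClosed_biInter fun a _ => isClosed_le (continuous_dotL a) continuous_const

lemma isClosed_cl (A : Set (Fin d → ℝ)) : IsClosed (cl A) := isClosed_closure

lemma convex_cl (A : Set (Fin d → ℝ)) : Convex ℝ (cl A) :=
  (convex_convexHull ℝ _).closure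

lemma subset_cl (A : Set (Fin d → ℝ)) : A ⊆ cl A :=
  fun a ha => subset_closure (subset_convexHull ℝ _ (Or.inl ha))

lemma zero_mem_cl (A : Set (Fin d → ℝ)) : (0 : Fin d → ℝ) ∈ cl A :=
  subset_closure (subset_convexHull ℝ _ (Or.inr rfl))

lemma cl_min {A T : Set (Fin d → ℝ)} (hsub : A ⊆ T) (hc : IsClosed T)
    (hco : Convex ℝ T) (h0 : (0 : Fin d → ℝ) ∈ T) : cl A ⊆ T := by
  have h : A ∪ {0} ⊆ T := Set.union_subset hsub (Set.singleton_subset_iff.2 h0)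
  exact hc.closure_subset_iff.2 (convexHull_min h hco)

lemma cl_mono {A B : Set (Fin d → ℝ)} (h : A ⊆ B) : cl A ⊆ cl B :=
  cl_min (h.trans (subset_cl B)) (isClosed_cl B) (convex_cl B) (zero_mem_cl B)

lemma cl_eq_self {A : Set (Fin d → ℝ)} (hc : IsClosed A) (hco : Convex ℝ A)
    (h0 : (0 : Fin d → ℝ) ∈ A) : cl A = A :=
  Set.Subset.antisymm (cl_min Set.Subset.rfl hc hco h0) (subset_cl A)

lemma polar_cl (A : Set (Fin d → ℝ)) : polar (cl A) = polar A := by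
  refine Set.Subset.antisymm (polar_anti (subset_cl A)) (fun y hy a ha => ?_)
  have hT : cl A ⊆ {a : Fin d → ℝ | y ⬝ᵥ a ≤ 1} := by
    refine cl_min hy (isClosed_le (by
      have : Continuous fun a : Fin d → ℝ => y ⬝ᵥ a := by
        have h := continuous_dotL (d := d) y
        exact h.congr fun a => dotProduct_comm a y
      exact this) continuous_const)
      (convex_halfSpace_le (isLinear_dotR y) 1) (by simp)
  exact hT ha

lemma polar_union (A B : Set (Fin d → ℝ)) : polar (A ∪ B) = polar A ∩ polar B := by
  ext y
  constructor
  · intro h; exact ⟨fun a ha => h a (Or.inl ha), fun a ha => h a (Or.inr ha)⟩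
  · rintro ⟨h1, h2⟩ a (ha | ha)
    exacts [h1 a ha, h2 a ha]

lemma subset_polar_polar (A : Set (Fin d → ℝ)) : A ⊆ polar (polar A) :=
  fun a ha y hy => by rw [dotProduct_comm]; exact hy a ha

lemma bipolar {A : Set (Fin d → ℝ)} (hc : IsClosed A) (hco : Convex ℝ A)
    (h0 : (0 : Fin d → ℝ) ∈ A) : polar (polar A) = A := by
  refine Set.Subset.antisymm (fun b hb => ?_) (subset_polar_polar A)
  by_contra hbA
  obtain ⟨f, u, hfA, hfb⟩ := geometric_hahn_banach_closed_point hco hc hbA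
  have hu : 0 < u := by
    have := hfA 0 h0
    simpa using this
  set v : Fin d → ℝ := fun i => u⁻¹ * f (fun j => if i = j then 1 else 0) with hv
  have key : ∀ w : Fin d → ℝ, v ⬝ᵥ w = u⁻¹ * f w := by
    intro w
    have hfw := LinearMap.pi_apply_eq_sum_univ (f : (Fin d → ℝ) →ₗ[ℝ] ℝ) w
    simp only [ContinuousLinearMap.coe_coe] at hfw
    rw [hfw, Finset.mul_sum]
    unfold dotProduct
    refine Finset.sum_congr rfl fun i _ => ?_
    simp only [hv, smul_eq_mul]
    ring
  have hvA : v ∈ polar A := by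
    intro a ha
    rw [key a]
    have hfa := hfA a ha
    calc u⁻¹ * f a ≤ u⁻¹ * u := by
          apply mul_le_mul_of_nonneg_left hfa.le (inv_nonneg.2 hu.le)
      _ = 1 := inv_mul_cancel₀ hu.ne'
  have hb1 := hb v hvA
  rw [dotProduct_comm, key b] at hb1
  have : 1 < u⁻¹ * f b := by
    rw [show (1 : ℝ) = u⁻¹ * u from (inv_mul_cancel₀ hu.ne').symm]
    exact mul_lt_mul_of_pos_left hfb (inv_pos.2 hu)
  linarith

lemma polar_polar_eq_cl (A : Set (Fin d → ℝ)) : polar (polar A) = cl A := by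
  conv_lhs => rw [← polar_cl A]
  exact bipolar (isClosed_cl A) (convex_cl A) (zero_mem_cl A)

lemma polar_inter {A B : Set (Fin d → ℝ)} (hAc : IsClosed A) (hAco : Convex ℝ A)
    (hA0 : (0 : Fin d → ℝ) ∈ A) (hBc : IsClosed B) (hBco : Convex ℝ B)
    (hB0 : (0 : Fin d → ℝ) ∈ B) :
    polar (A ∩ B) = cl (polar A ∪ polar B) := by
  have h1 : polar (cl (polar A ∪ polar B)) = A ∩ B := by
    rw [polar_cl, polar_union, bipolar hAc hAco hA0, bipolar hBc hBco hB0]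
  calc polar (A ∩ B) = polar (polar (cl (polar A ∪ polar B))) := by rw [h1]
    _ = cl (cl (polar A ∪ polar B)) := polar_polar_eq_cl _
    _ = cl (polar A ∪ polar B) :=
        cl_eq_self (isClosed_cl _) (convex_cl _) (zero_mem_cl _)

lemma cl_union_cl (A B : Set (Fin d → ℝ)) : cl (A ∪ cl B) = cl (A ∪ B) := by
  refine Set.Subset.antisymm ?_ (cl_mono (Set.union_subset_union_right _ (subset_cl B)))
  exact cl_min (Set.union_subset ((Set.subset_union_left).trans (subset_cl _))
    (cl_mono Set.subset_union_right))
    (isClosed_cl _) (convex_cl _) (zero_mem_cl _)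

variable {U : Matrix (Fin d) (Fin d) ℝ}

lemma dot_mulVec_eq (U : Matrix (Fin d) (Fin d) ℝ) (y a : Fin d → ℝ) :
    y ⬝ᵥ (U *ᵥ a) = (Uᵀ *ᵥ y) ⬝ᵥ a := by
  rw [dotProduct_mulVec, mulVec_transpose]

lemma isLinearMap_mulVec (U : Matrix (Fin d) (Fin d) ℝ) :
    IsLinearMap ℝ U.mulVec :=
  ⟨fun a b => mulVec_add U a b, fun c a => mulVec_smul U c a⟩

lemma continuous_mulVec (U : Matrix (Fin d) (Fin d) ℝ) : Continuous U.mulVec := by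
  have h := (U.mulVecLin).continuous_of_finiteDimensional
  exact h.congr fun v => by rw [mulVecLin_apply]

lemma polar_image (h1 : U * Uᵀ = 1) (h2 : Uᵀ * U = 1) (A : Set (Fin d → ℝ)) :
    polar (U.mulVec '' A) = U.mulVec '' polar A := by
  ext y
  constructor
  · intro hy
    refine ⟨Uᵀ *ᵥ y, fun a ha => ?_, ?_⟩
    · have := hy (U *ᵥ a) ⟨a, ha, rfl⟩
      rwa [dot_mulVec_eq] at this
    · rw [mulVec_mulVec, h1, one_mulVec]
  · rintro ⟨z, hz, rfl⟩ b ⟨a, ha, rfl⟩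
    have : (U *ᵥ z) ⬝ᵥ (U *ᵥ a) = z ⬝ᵥ a := by
      rw [dot_mulVec_eq, mulVec_mulVec, h2, one_mulVec]
    rw [this]
    exact hz a ha

lemma image_closure_mulVec (h1 : U * Uᵀ = 1) (h2 : Uᵀ * U = 1) (A : Set (Fin d → ℝ)) :
    U.mulVec '' closure A = closure (U.mulVec '' A) := by
  have he : Function.LeftInverse Uᵀ.mulVec U.mulVec := fun v => by
    rw [mulVec_mulVec, h2, one_mulVec]
  have he' : Function.RightInverse Uᵀ.mulVec U.mulVec := fun v => by
    rw [mulVec_mulVec, h1, one_mulVec]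
  exact (Homeomorph.mk ⟨U.mulVec, Uᵀ.mulVec, he, he'⟩
    (continuous_mulVec U) (continuous_mulVec Uᵀ)).image_closure A

lemma image_cl (h1 : U * Uᵀ = 1) (h2 : Uᵀ * U = 1) (A : Set (Fin d → ℝ)) :
    U.mulVec '' cl A = cl (U.mulVec '' A) := by
  unfold cl
  rw [image_closure_mulVec h1 h2]
  congr 1
  rw [(isLinearMap_mulVec U).image_convexHull, Set.image_union, Set.image_singleton,
    mulVec_zero]

lemma mulVec_injective (h2 : Uᵀ * U = 1) : Function.Injective U.mulVec := by
  have he : Function.LeftInverse Uᵀ.mulVec U.mulVec := fun v => by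
    rw [mulVec_mulVec, h2, one_mulVec]
  exact he.injective

end AddCutAux

open AddCutAux

theorem addAndCut_selfPolar {d : ℕ} (P : Set (Fin d → ℝ))
    (U : Matrix (Fin d) (Fin d) ℝ) (hU : U ∈ Matrix.orthogonalGroup (Fin d) ℝ)
    (hself : P = U.mulVec '' polar P)
    (x : Fin d → ℝ) (hx : (U * U).mulVec x = x)
    (hcomm : cl ((P ∩ U.mulVec '' polar {x}) ∪ {x}) =
      cl (P ∪ {x}) ∩ U.mulVec '' polar {x}) :
    (cl (P ∪ {x}) ∩ U.mulVec '' polar {x}) =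
      U.mulVec '' polar (cl (P ∪ {x}) ∩ U.mulVec '' polar {x}) := by
  have hstar : star U = Uᵀ := by
    ext i j
    simp [Matrix.star_apply]
  have h1 : U * Uᵀ = 1 := by
    rw [← hstar]; exact (Matrix.mem_orthogonalGroup_iff _ _).mp hU
  have h2 : Uᵀ * U = 1 := by
    rw [← hstar]; exact (Matrix.mem_orthogonalGroup_iff' _ _).mp hU
  set B := U.mulVec '' polar {x} with hB
  have hBc : IsClosed B := by
    rw [← closure_eq_iff_isClosed, hB, ← image_closure_mulVec h1 h2,
      (isClosed_polar _).closure_eq]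
  have hBco : Convex ℝ B := (convex_polar _).is_linear_image (isLinearMap_mulVec U)
  have hB0 : (0 : Fin d → ℝ) ∈ B := ⟨0, zero_mem_polar _, mulVec_zero U⟩
  have himg2 : U.mulVec '' (U.mulVec '' cl {x}) = cl {x} := by
    rw [image_cl h1 h2, image_cl h1 h2, Set.image_singleton, Set.image_singleton,
      mulVec_mulVec, hx]
  calc cl (P ∪ {x}) ∩ B
      = cl ((P ∩ B) ∪ {x}) := hcomm.symm
    _ = cl ((P ∩ B) ∪ cl {x}) := (cl_union_cl _ _).symm
    _ = cl ((U.mulVec '' (polar P ∩ polar {x})) ∪ U.mulVec '' (U.mulVec '' cl {x})) := by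
        rw [himg2, Set.image_inter (mulVec_injective h2), ← hself, ← hB]
    _ = U.mulVec '' cl ((polar P ∩ polar {x}) ∪ U.mulVec '' cl {x}) := by
        rw [image_cl h1 h2 ((polar P ∩ polar {x}) ∪ U.mulVec '' cl {x}), Set.image_union]
    _ = U.mulVec '' cl ((polar (cl (P ∪ {x}))) ∪ polar B) := by
        rw [polar_cl, polar_union, hB, polar_image h1 h2, polar_polar_eq_cl]
    _ = U.mulVec '' polar (cl (P ∪ {x}) ∩ B) := by
        rw [polar_inter (isClosed_cl _) (convex_cl _) (zero_mem_cl _) hBc hBco hB0]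
end
end

section
/- Let P ⊆ ℝ^d be a d-dimensional polytope with 0 in its interior satisfying P = −P°, and let V be its vertex set. If {v₁, …, v_k} ⊆ V satisfies ⟨v_i, v_j⟩ = −1 for all i ≠ j, then P ∩ aff({v₁,…,v_k}) = conv({v₁,…,v_k}), and the translated vectors v₁ − v_k, …, v_{k−1} − v_k are linearly independent (so conv({v₁,…,v_k}) is a (k−1)-dimensional simplex). -/
open Matrix Pointwise

noncomputable section

private lemma sum_dotProduct' {d : ℕ} {ι : Type*} (s : Finset ι) (f : ι → Fin d → ℝ)
    (w : Fin d → ℝ) : (∑ i ∈ s, f i) ⬝ᵥ w = ∑ i ∈ s, f i ⬝ᵥ w := by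
  simp only [dotProduct, Finset.sum_apply, Finset.sum_mul]
  exact Finset.sum_comm

private lemma dotProduct_sum' {d : ℕ} {ι : Type*} (s : Finset ι) (f : ι → Fin d → ℝ)
    (w : Fin d → ℝ) : w ⬝ᵥ (∑ i ∈ s, f i) = ∑ i ∈ s, w ⬝ᵥ f i := by
  simp only [dotProduct, Finset.sum_apply, Finset.mul_sum]
  exact Finset.sum_comm

theorem clique_section_simplex {d k : ℕ} (V : Finset (Fin d → ℝ))
    (P : Set (Fin d → ℝ)) (hP : P = convexHull ℝ (V : Set (Fin d → ℝ)))
    (h0 : 0 ∈ interior P) (hself : P = -polar P)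
    (v : Fin (k + 1) → (Fin d → ℝ)) (hvV : ∀ i, v i ∈ V)
    (hclique : ∀ i j, i ≠ j → v i ⬝ᵥ v j = -1) :
    P ∩ (affineSpan ℝ (Set.range v) : Set (Fin d → ℝ)) = convexHull ℝ (Set.range v) ∧
      LinearIndependent ℝ (fun i : Fin k => v i.castSucc - v (Fin.last k)) := by
  have hvP : ∀ i, v i ∈ P := fun i => hP ▸ subset_convexHull ℝ _ (hvV i)
  have hge : ∀ x ∈ P, ∀ a ∈ P, -1 ≤ x ⬝ᵥ a := by
    intro x hx a ha
    rw [hself, Set.mem_neg] at hx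
    have := hx a ha
    rw [neg_dotProduct] at this
    linarith
  have hself_nonneg : ∀ i, 0 ≤ v i ⬝ᵥ v i := by
    intro i
    exact Finset.sum_nonneg fun j _ => mul_self_nonneg _
  constructor
  · apply Set.Subset.antisymm
    · rintro x ⟨hxP, hxA⟩
      obtain ⟨w, hw1, rfl⟩ := eq_affineCombination_of_mem_affineSpan_of_fintype hxA
      have hlin : (Finset.univ.affineCombination ℝ v w : Fin d → ℝ)
          = ∑ i, w i • v i := Finset.affineCombination_eq_linear_combination _ _ _ hw1
      have hwnn : ∀ j, 0 ≤ w j := by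
        intro j
        have hdot : (Finset.univ.affineCombination ℝ v w : Fin d → ℝ) ⬝ᵥ v j
            = w j * (v j ⬝ᵥ v j + 1) - 1 := by
          rw [hlin, sum_dotProduct']
          rw [← Finset.add_sum_erase _ _ (Finset.mem_univ j)]
          have he : ∑ i ∈ Finset.univ.erase j, (w i • v i) ⬝ᵥ v j
              = ∑ i ∈ Finset.univ.erase j, w i * (-1) := by
            apply Finset.sum_congr rfl
            intro i hi
            rw [smul_dotProduct, hclique i j (Finset.mem_erase.1 hi).1]
            rfl
          rw [he, smul_dotProduct, ← Finset.sum_mul]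
          have hs : ∑ i ∈ Finset.univ.erase j, w i = 1 - w j := by
            have := Finset.add_sum_erase _ w (Finset.mem_univ j)
            rw [hw1] at this; linarith
          rw [hs, smul_eq_mul]; ring
        have := hge _ hxP _ (hvP j)
        rw [hdot] at this
        nlinarith [hself_nonneg j]
      exact affineCombination_mem_convexHull (fun i _ => hwnn i) hw1
    · intro x hx
      refine ⟨?_, convexHull_subset_affineSpan _ hx⟩
      rw [hP]
      exact convexHull_mono (Set.range_subset_iff.2 fun i => hvV i) hx
  · rw [Fintype.linearIndependent_iff]
    intro g hg
    set c := v (Fin.last k) ⬝ᵥ v (Fin.last k) with hc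
    have hGram : ∀ i j : Fin k,
        (v i.castSucc - v (Fin.last k)) ⬝ᵥ (v j.castSucc - v (Fin.last k))
        = (1 + c) + (if i = j then v i.castSucc ⬝ᵥ v i.castSucc + 1 else 0) := by
      intro i j
      have hil : i.castSucc ≠ Fin.last k := Fin.castSucc_lt_last i |>.ne
      have hjl : j.castSucc ≠ Fin.last k := Fin.castSucc_lt_last j |>.ne
      rw [sub_dotProduct, dotProduct_sub, dotProduct_sub,
        hclique _ _ hil, hclique _ _ (Ne.symm hjl)]
      by_cases h : i = j
      · subst h; rw [if_pos rfl, hc]; ring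
      · have hne : i.castSucc ≠ j.castSucc := fun e => h (Fin.castSucc_injective _ e)
        rw [hclique _ _ hne, if_neg h, hc]; ring
    have key : (0 : ℝ) = (1 + c) * (∑ i, g i) ^ 2
        + ∑ i, g i ^ 2 * (v i.castSucc ⬝ᵥ v i.castSucc + 1) := by
      have h0' : (0 : ℝ) = (∑ i, g i • (v i.castSucc - v (Fin.last k)))
          ⬝ᵥ (∑ j, g j • (v j.castSucc - v (Fin.last k))) := by
        rw [hg]; simp
      rw [sum_dotProduct'] at h0'
      calc (0:ℝ) = ∑ i, ∑ j, g i * g j * ((v i.castSucc - v (Fin.last k)) ⬝ᵥ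
            (v j.castSucc - v (Fin.last k))) := by
            rw [h0']
            apply Finset.sum_congr rfl; intro i _
            rw [smul_dotProduct, dotProduct_sum', smul_eq_mul, Finset.mul_sum]
            apply Finset.sum_congr rfl; intro j _
            rw [dotProduct_smul, smul_eq_mul]; ring
        _ = ∑ i, ∑ j, (g i * g j * (1 + c)
              + (if i = j then g i * g j * (v i.castSucc ⬝ᵥ v i.castSucc + 1) else 0)) := by
            apply Finset.sum_congr rfl; intro i _
            apply Finset.sum_congr rfl; intro j _
            rw [hGram]
            by_cases h : i = j
            · rw [if_pos h, if_pos h]; ring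
            · rw [if_neg h, if_neg h]; ring
        _ = (1 + c) * (∑ i, g i) ^ 2
              + ∑ i, g i ^ 2 * (v i.castSucc ⬝ᵥ v i.castSucc + 1) := by
            have hin : ∀ i : Fin k, ∑ j, (g i * g j * (1 + c)
                + (if i = j then g i * g j * (v i.castSucc ⬝ᵥ v i.castSucc + 1) else 0))
                = g i * (∑ j, g j) * (1 + c)
                  + g i ^ 2 * (v i.castSucc ⬝ᵥ v i.castSucc + 1) := by
              intro i
              rw [Finset.sum_add_distrib]
              congr 1
              · rw [← Finset.sum_mul, ← Finset.mul_sum]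
              · rw [Finset.sum_ite_eq Finset.univ i
                  (fun j => g i * g j * (v i.castSucc ⬝ᵥ v i.castSucc + 1))]
                rw [if_pos (Finset.mem_univ i)]; ring
            rw [Finset.sum_congr rfl fun i _ => hin i, Finset.sum_add_distrib,
              ← Finset.sum_mul, ← Finset.sum_mul]
            ring
    intro i
    have hcn : (0:ℝ) ≤ c := hc ▸ hself_nonneg (Fin.last k)
    have h1 : 0 ≤ (1 + c) * (∑ i, g i) ^ 2 :=
      mul_nonneg (by linarith) (sq_nonneg _)
    have h2 : ∀ j ∈ Finset.univ, (0:ℝ) ≤ g j ^ 2 * (v j.castSucc ⬝ᵥ v j.castSucc + 1) := by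
      intro j _
      have := hself_nonneg j.castSucc; positivity
    have hsum0 : ∑ j, g j ^ 2 * (v j.castSucc ⬝ᵥ v j.castSucc + 1) = 0 := by
      have hle := Finset.sum_nonneg h2
      linarith
    have hz := (Finset.sum_eq_zero_iff_of_nonneg h2).1 hsum0 i (Finset.mem_univ i)
    have hpos : 0 < v i.castSucc ⬝ᵥ v i.castSucc + 1 := by
      have := hself_nonneg i.castSucc; linarith
    have hsq : g i ^ 2 = 0 := by
      rcases mul_eq_zero.1 hz with h | h
      · exact h
      · linarith
    exact pow_eq_zero_iff two_ne_zero |>.1 hsq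
end
end

section
/- Let P ⊆ ℝ^d be a convex body with P ⊆ −P° contained in a single closed orthant O of ℝ^d, let v be a unit vector in the interior of O, and choose μ > 0 with μ ≤ 1 / max_{x∈P} ⟨x, v⟩. Set Q = conv(P ∪ {−μv}). Then Q ⊆ −Q°, i.e., ⟨w, x⟩ ≥ −1 for all w, x ∈ Q. -/
open Matrix Pointwise

noncomputable section

/-- The closed orthant of `ℝ^d` with signs prescribed by `s`. -/
def orthant {d : ℕ} (s : Fin d → Bool) : Set (Fin d → ℝ) :=
  {x | ∀ i, if s i then 0 ≤ x i else x i ≤ 0}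

theorem addVertex_subset_negPolar {d : ℕ} (P : Set (Fin d → ℝ))
    (hPc : IsCompact P) (hPconv : Convex ℝ P) (hPne : P.Nonempty)
    (hsub : P ⊆ -polar P)
    (s : Fin d → Bool) (hPO : P ⊆ orthant s)
    (v : Fin d → ℝ) (hvunit : v ⬝ᵥ v = 1)
    (hvint : ∀ i, if s i then 0 < v i else v i < 0)
    (μ : ℝ) (hμ : 0 < μ) (hμle : ∀ x ∈ P, x ⬝ᵥ v ≤ 1 / μ)
    (Q : Set (Fin d → ℝ)) (hQ : Q = convexHull ℝ (P ∪ {-μ • v})) :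
    ∀ w ∈ Q, ∀ x ∈ Q, -1 ≤ w ⬝ᵥ x := by
  subst hQ
  have key : ∀ w ∈ P ∪ {-μ • v}, ∀ x ∈ P ∪ {-μ • v}, -1 ≤ w ⬝ᵥ x := by
    rintro w (hw | hw) x (hx | hx)
    · have h1 := hsub hw
      rw [Set.mem_neg] at h1
      have h2 := h1 x hx
      rw [neg_dotProduct] at h2
      linarith
    · rw [Set.mem_singleton_iff] at hx
      subst hx
      have h2 := hμle w hw
      have : w ⬝ᵥ (-μ • v) = -μ * (w ⬝ᵥ v) := by
        rw [dotProduct_smul]; simp [smul_eq_mul]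
      rw [this]
      have : μ * (w ⬝ᵥ v) ≤ 1 := by
        rw [div_eq_mul_inv] at h2
        calc μ * (w ⬝ᵥ v) ≤ μ * (1 * μ⁻¹) := by
              exact mul_le_mul_of_nonneg_left h2 hμ.le
          _ = 1 := by field_simp
      linarith
    · rw [Set.mem_singleton_iff] at hw
      subst hw
      have h2 := hμle x hx
      have : (-μ • v) ⬝ᵥ x = -μ * (x ⬝ᵥ v) := by
        rw [smul_dotProduct]; simp [smul_eq_mul, dotProduct_comm]
      rw [this]
      have : μ * (x ⬝ᵥ v) ≤ 1 := by
        rw [div_eq_mul_inv] at h2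
        calc μ * (x ⬝ᵥ v) ≤ μ * (1 * μ⁻¹) := by
              exact mul_le_mul_of_nonneg_left h2 hμ.le
          _ = 1 := by field_simp
      linarith
    · rw [Set.mem_singleton_iff] at hw hx
      subst hw; subst hx
      have : (-μ • v) ⬝ᵥ (-μ • v) = μ * μ * (v ⬝ᵥ v) := by
        rw [smul_dotProduct, dotProduct_smul]; simp [smul_eq_mul]; ring
      rw [this, hvunit]
      nlinarith
  have step1 : ∀ w ∈ P ∪ {-μ • v}, ∀ x ∈ convexHull ℝ (P ∪ {-μ • v}), -1 ≤ w ⬝ᵥ x := by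
    intro w hw x hx
    have hconv : Convex ℝ {x : Fin d → ℝ | -1 ≤ w ⬝ᵥ x} :=
      convex_halfSpace_ge ⟨fun a b => dotProduct_add w a b, fun c a => by
        rw [dotProduct_smul]⟩ (-1)
    exact convexHull_min (fun y hy => key w hw y hy) hconv hx
  intro w hw x hx
  have hconv : Convex ℝ {w : Fin d → ℝ | -1 ≤ w ⬝ᵥ x} :=
    convex_halfSpace_ge ⟨fun a b => add_dotProduct a b x, fun c a => by
      rw [smul_dotProduct]⟩ (-1)
  exact convexHull_min (fun y hy => step1 y hy x hx) hconv hw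
end
end
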